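/- Let φ be a HyLTL⁺ formula over A and FC, and let 𝒜 = (Q, q₀, δ, F) be a Büchi automaton over the alphabet of subsets of AP = FC ⊎ B whose accepted language is exactly the set of discrete sequences Σ with Σ,1 ⊨ γ(φ). Let ℋ_φ be the BHA constructed from 𝒜 as described. Then for every hybrid trace α over A and X, if ℋ_φ accepts α then α,1 ⊨ φ. -/

import Mathlib

/-! ## Valus, trajectories and flow constraints -/

/-- A valuation over the variables `X`. -/
abbrev Valu (X : Type) := X → ℝ

/-- A flow constraint over `X`: a set of pairs (value, derivative) of valuations. -/
abbrev FlowConstraint (X : Type) := Set (Valu X × Valu X)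

/-- A trajectory over `X`: a nonnegative duration together with a map `ℝ → Valu X`
(only its values on `[0, dur]` matter). -/
structure Traj (X : Type) where
  dur : ℝ
  dur_nonneg : 0 ≤ dur
  f : ℝ → Valu X

namespace Traj

variable {X : Type}

/-- A trajectory satisfies a flow constraint iff at every time of its domain the pair
(value, derivative) belongs to the constraint. -/
def sat (τ : Traj X) (C : FlowConstraint X) : Prop :=
  ∀ t ∈ Set.Icc (0 : ℝ) τ.dur,
    (τ.f t, fun x => deriv (fun s => τ.f s x) t) ∈ C

def firstState (τ : Traj X) : Valu X := τ.f 0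

def lastState (τ : Traj X) : Valu X := τ.f τ.dur

/-- Identification of trajectories: same duration and same values on the domain. -/
def Equiv (τ τ' : Traj X) : Prop :=
  τ.dur = τ'.dur ∧ ∀ t ∈ Set.Icc (0 : ℝ) τ.dur, τ.f t = τ'.f t

/-- The restriction `τ↾[t,t']` of a trajectory. -/
def restrict (τ : Traj X) (t t' : ℝ) (h : t ≤ t') : Traj X :=
  ⟨t' - t, sub_nonneg.mpr h, fun s => τ.f (s + t)⟩

/-- Concatenation of two trajectories. -/
noncomputable def concat (τ₁ τ₂ : Traj X) : Traj X :=
  ⟨τ₁.dur + τ₂.dur, add_nonneg τ₁.dur_nonneg τ₂.dur_nonneg,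
   fun s => if s ≤ τ₁.dur then τ₁.f s else τ₂.f (s - τ₁.dur)⟩

end Traj

/-! ## Hybrid traces -/

/-- A hybrid trace `τ₁ a₁ τ₂ a₂ …` over `A` and `X`, 0-indexed:
`traj n` is `τ_{n+1}` and `act n` is `a_{n+1}`. -/
structure HybridTrace (X A : Type) where
  traj : ℕ → Traj X
  act : ℕ → A

/-- Concatenation `g m · g (m+1) · ⋯ · g n` of a segment of trajectories. -/
noncomputable def concatSeg {X : Type} (g : ℕ → Traj X) (m n : ℕ) : Traj X :=
  ((List.range (n - m)).map (fun i => g (m + 1 + i))).foldl Traj.concat (g m)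

/-- A hybrid trace over `A ∪ {T}` (with `T = none`) has infinitely many actions in `A`. -/
def HybridTrace.InfA {X A : Type} (β : HybridTrace X (Option A)) : Prop :=
  ∀ N, ∃ n, N ≤ n ∧ (β.act n).isSome

/-- The restriction `β↾A` of a hybrid trace over `A ∪ {T}` (with `T = none`) to `A`:
delete the occurrences of `T` and concatenate the adjacent trajectories.  (It is
intended to be applied to traces having infinitely many actions in `A`.) -/
noncomputable def HybridTrace.restrictA {X A : Type} [Inhabited A]
    (β : HybridTrace X (Option A)) : HybridTrace X A :=
  letI k : ℕ → ℕ := Nat.nth (fun n => (β.act n).isSome)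
  { traj := fun i =>
      match i with
      | 0 => concatSeg β.traj 0 (k 0)
      | i + 1 => concatSeg β.traj (k i + 1) (k (i + 1))
    act := fun i => (β.act (k i)).getD default }

/-- Identification of hybrid traces (pointwise identification of trajectories). -/
def HybridTrace.Equiv {X A : Type} (α α' : HybridTrace X A) : Prop :=
  (∀ i, (α.traj i).Equiv (α'.traj i)) ∧ ∀ i, α.act i = α'.act i

/-! ## HyLTL syntax and semantics -/

/-- HyLTL formulas over actions `A` and flow-constraint atoms `F`. -/
inductive HyLTL (A F : Type) : Type where
  | flow : F → HyLTL A F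
  | act : A → HyLTL A F
  | not : HyLTL A F → HyLTL A F
  | and : HyLTL A F → HyLTL A F → HyLTL A F
  | or : HyLTL A F → HyLTL A F → HyLTL A F
  | next : HyLTL A F → HyLTL A F
  | untl : HyLTL A F → HyLTL A F → HyLTL A F
  | rel : HyLTL A F → HyLTL A F → HyLTL A F

/-- Satisfaction of a HyLTL formula by a hybrid trace at a (0-indexed) position;
`I` interprets flow-constraint atoms.  Position `i` here is position `i+1` of the paper. -/
def HyLTL.Sat {X A F : Type} (I : F → FlowConstraint X) (α : HybridTrace X A) :
    HyLTL A F → ℕ → Prop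
  | .flow f, i => (α.traj i).sat (I f)
  | .act a, i => 0 < i ∧ α.act (i - 1) = a
  | .not φ, i => ¬ HyLTL.Sat I α φ i
  | .and φ ψ, i => HyLTL.Sat I α φ i ∧ HyLTL.Sat I α ψ i
  | .or φ ψ, i => HyLTL.Sat I α φ i ∨ HyLTL.Sat I α ψ i
  | .next φ, i => HyLTL.Sat I α φ (i + 1)
  | .untl φ ψ, i =>
      ∃ j, i ≤ j ∧ HyLTL.Sat I α ψ j ∧ ∀ k, i ≤ k → k < j → HyLTL.Sat I α φ k
  | .rel φ ψ, i =>
      ∀ j, i ≤ j → (∀ k, i ≤ k → k < j → ¬ HyLTL.Sat I α φ k) → HyLTL.Sat I α ψ j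

/-- Negation normal form: negation applied only to actions and flow constraints. -/
inductive HyLTL.NNF {A F : Type} : HyLTL A F → Prop
  | flow (f : F) : NNF (.flow f)
  | act (a : A) : NNF (.act a)
  | nflow (f : F) : NNF (.not (.flow f))
  | nact (a : A) : NNF (.not (.act a))
  | and {φ ψ} : NNF φ → NNF ψ → NNF (.and φ ψ)
  | or {φ ψ} : NNF φ → NNF ψ → NNF (.or φ ψ)
  | next {φ} : NNF φ → NNF (.next φ)
  | untl {φ ψ} : NNF φ → NNF ψ → NNF (.untl φ ψ)
  | rel {φ ψ} : NNF φ → NNF ψ → NNF (.rel φ ψ)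

/-- HyLTL⁺ formulas: flow constraints occur only positively. -/
inductive HyLTL.Positive {A F : Type} : HyLTL A F → Prop
  | flow (f : F) : Positive (.flow f)
  | act (a : A) : Positive (.act a)
  | nact (a : A) : Positive (.not (.act a))
  | and {φ ψ} : Positive φ → Positive ψ → Positive (.and φ ψ)
  | or {φ ψ} : Positive φ → Positive ψ → Positive (.or φ ψ)
  | next {φ} : Positive φ → Positive (.next φ)
  | untl {φ ψ} : Positive φ → Positive ψ → Positive (.untl φ ψ)
  | rel {φ ψ} : Positive φ → Positive ψ → Positive (.rel φ ψ)

/-- The translation π from NNF HyLTL formulas over `A` to HyLTL⁺ formulas over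
`A ∪ {T}`, where the fresh action `T` is `none` and flow atoms are semantic flow
constraints (so that the dual constraint `f̄` is the set complement `fᶜ`). -/
def piTr {X A : Type} : HyLTL A (FlowConstraint X) → HyLTL (Option A) (FlowConstraint X)
  | .flow f =>
      .and (.flow f) (.next (.untl (.and (.act none) (.flow f)) (.not (.act none))))
  | .act a => .act (some a)
  | .not (.flow f) =>
      .or (.flow fᶜ) (.next (.untl (.act none) (.and (.act none) (.flow fᶜ))))
  | .not (.act a) => .not (.act (some a))
  | .not φ => .not (piTr φ)
  | .and φ ψ => .and (piTr φ) (piTr ψ)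
  | .or φ ψ => .or (piTr φ) (piTr ψ)
  | .next φ => .next (.untl (.act none) (.and (.not (.act none)) (piTr φ)))
  | .untl φ ψ => .untl (.or (.act none) (piTr φ)) (.and (.not (.act none)) (piTr ψ))
  | .rel φ ψ => .rel (.and (.not (.act none)) (piTr φ)) (.or (.act none) (piTr ψ))

/-! ## Discrete LTL -/

/-- LTL formulas over atomic propositions `P`. -/
inductive LTL (P : Type) : Type where
  | atom : P → LTL P
  | not : LTL P → LTL P
  | and : LTL P → LTL P → LTL P
  | or : LTL P → LTL P → LTL P
  | next : LTL P → LTL P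
  | untl : LTL P → LTL P → LTL P
  | rel : LTL P → LTL P → LTL P

/-- Satisfaction of an LTL formula by a discrete sequence (0-indexed: position `i`
here is position `i+1` of the paper). -/
def LTL.Sat {P : Type} (w : ℕ → Set P) : LTL P → ℕ → Prop
  | .atom p, i => p ∈ w i
  | .not γ, i => ¬ LTL.Sat w γ i
  | .and γ δ, i => LTL.Sat w γ i ∧ LTL.Sat w δ i
  | .or γ δ, i => LTL.Sat w γ i ∨ LTL.Sat w δ i
  | .next γ, i => LTL.Sat w γ (i + 1)
  | .untl γ δ, i =>
      ∃ j, i ≤ j ∧ LTL.Sat w δ j ∧ ∀ k, i ≤ k → k < j → LTL.Sat w γ k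
  | .rel γ δ, i =>
      ∀ j, i ≤ j → (∀ k, i ≤ k → k < j → ¬ LTL.Sat w γ k) → LTL.Sat w δ j

/-- Conjunction `γ₁ ∧ (γ₂ ∧ (⋯ ∧ γₙ))` of a nonempty list of LTL formulas. -/
def LTL.bigConj {P : Type} : (l : List (LTL P)) → l ≠ [] → LTL P
  | [], h => absurd rfl h
  | [γ], _ => γ
  | γ :: δ :: l, _ => .and γ (LTL.bigConj (δ :: l) (by simp))

/-- `γ` contains no atom from `FC` (the left summand). -/
def LTL.noFC {FC B : Type} : LTL (FC ⊕ B) → Prop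
  | .atom (Sum.inl _) => False
  | .atom (Sum.inr _) => True
  | .not γ => LTL.noFC γ
  | .and γ δ => LTL.noFC γ ∧ LTL.noFC δ
  | .or γ δ => LTL.noFC γ ∧ LTL.noFC δ
  | .next γ => LTL.noFC γ
  | .untl γ δ => LTL.noFC γ ∧ LTL.noFC δ
  | .rel γ δ => LTL.noFC γ ∧ LTL.noFC δ

/-- `γ` is FC-positive: no atom from `FC` occurs within the scope of a negation. -/
def LTL.FCpos {FC B : Type} : LTL (FC ⊕ B) → Prop
  | .atom _ => True
  | .not γ => LTL.noFC γ
  | .and γ δ => LTL.FCpos γ ∧ LTL.FCpos δ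
  | .or γ δ => LTL.FCpos γ ∧ LTL.FCpos δ
  | .next γ => LTL.FCpos γ
  | .untl γ δ => LTL.FCpos γ ∧ LTL.FCpos δ
  | .rel γ δ => LTL.FCpos γ ∧ LTL.FCpos δ

/-! ## The translation γ from HyLTL to LTL -/

/-- The formula `𝐛(a)`: the conjunction of the letters in `b a` and of the negations
of the letters not in `b a` (given that `b a` is nonempty). -/
noncomputable def bEnc {A FC B : Type} [Fintype B] [DecidableEq B]
    (b : A → Finset B) (hb : ∀ a, (b a).Nonempty) (a : A) : LTL (FC ⊕ B) :=
  LTL.bigConj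
    (((b a).toList.map fun j => LTL.atom (Sum.inr j : FC ⊕ B)) ++
      ((Finset.univ \ b a).toList.map fun j => LTL.not (LTL.atom (Sum.inr j : FC ⊕ B))))
    (by
      intro h
      rcases List.append_eq_nil_iff.mp h with ⟨h1, -⟩
      exact (hb a).ne_empty (Finset.toList_eq_nil.mp (List.map_eq_nil_iff.mp h1)))

/-- The translation γ₀ from HyLTL formulas over `A` and `FC` to LTL formulas over
`AP = FC ⊎ B`. -/
noncomputable def gamma0 {A FC B : Type} [Fintype B] [DecidableEq B]
    (b : A → Finset B) (hb : ∀ a, (b a).Nonempty) :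
    HyLTL A FC → LTL (FC ⊕ B)
  | .flow f => .atom (Sum.inl f)
  | .act a => bEnc b hb a
  | .not φ => .not (gamma0 b hb φ)
  | .and φ ψ => .and (gamma0 b hb φ) (gamma0 b hb ψ)
  | .or φ ψ => .or (gamma0 b hb φ) (gamma0 b hb ψ)
  | .next φ => .next (gamma0 b hb φ)
  | .untl φ ψ => .untl (gamma0 b hb φ) (gamma0 b hb ψ)
  | .rel φ ψ => .rel (gamma0 b hb φ) (gamma0 b hb ψ)

/-- The translation `γ(φ) = (⋀_{j ∈ B} ¬ bⱼ) ∧ γ₀(φ)`. -/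
noncomputable def gammaTr {A FC B : Type} [Fintype B] [DecidableEq B]
    (b : A → Finset B) (hb : ∀ a, (b a).Nonempty) (φ : HyLTL A FC) : LTL (FC ⊕ B) :=
  LTL.bigConj
    (((Finset.univ : Finset B).toList.map fun j =>
        LTL.not (LTL.atom (Sum.inr j : FC ⊕ B))) ++ [gamma0 b hb φ])
    (by simp)

/-- The discrete sequence `Σ(α)` associated with a hybrid trace `α` (0-indexed). -/
noncomputable def SigmaTrace {X A FC B : Type}
    (I : FC → FlowConstraint X) (b : A → Finset B) (α : HybridTrace X A) :
    ℕ → Set (FC ⊕ B)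
  | 0 => Sum.inl '' {f | (α.traj 0).sat (I f)}
  | n + 1 => Sum.inl '' {f | (α.traj (n + 1)).sat (I f)} ∪ Sum.inr '' ↑(b (α.act n))

/-! ## Büchi automata -/

/-- A Büchi automaton over the alphabet `Λ` with states `Q`. -/
structure Buchi (Q Λ : Type) where
  init : Q
  tr : Set (Q × Λ × Q)
  acc : Set Q

/-- A Büchi automaton accepts an infinite word (0-indexed) iff it has a run over
it visiting some accepting state infinitely often. -/
def Buchi.Accepts {Q Λ : Type} (𝒜 : Buchi Q Λ) (w : ℕ → Λ) : Prop :=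
  ∃ r : ℕ → Q, r 0 = 𝒜.init ∧ (∀ n, (r n, w n, r (n + 1)) ∈ 𝒜.tr) ∧
    ∃ q ∈ 𝒜.acc, ∀ N, ∃ n, N ≤ n ∧ r n = q

/-! ## Hybrid automata with Büchi condition -/

/-- A hybrid automaton with Büchi acceptance condition (BHA) over `X` and `A`. -/
structure BHA (X A : Type) where
  Loc : Type
  locFinite : Finite Loc
  Edg : Set (Loc × A × Loc)
  Dyn : Loc → FlowConstraint X
  Rst : Loc × A × Loc → Set (Valu X × Valu X)
  Init : Set Loc
  Final : Set Loc

/-- Acceptance of a hybrid trace by a BHA. -/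
def BHA.Accepts {X A : Type} (H : BHA X A) (α : HybridTrace X A) : Prop :=
  ∃ ℓ : ℕ → H.Loc,
    ℓ 0 ∈ H.Init ∧
    (∀ i, (α.traj i).sat (H.Dyn (ℓ i)) ∧
      (ℓ i, α.act i, ℓ (i + 1)) ∈ H.Edg ∧
      ((α.traj i).lastState, (α.traj (i + 1)).firstState) ∈
        H.Rst (ℓ i, α.act i, ℓ (i + 1))) ∧
    ∃ l ∈ H.Final, ∀ N, ∃ n, N ≤ n ∧ ℓ n = l

/-- The BHA `ℋ_φ` constructed (as in Algorithm 1, without reachability pruning) from a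
Büchi automaton over the alphabet of subsets of `AP = FC ⊎ B`. -/
def HofBuchi {X A FC B Q : Type} [Finite Q] [Finite FC]
    (I : FC → FlowConstraint X) (b : A → Finset B)
    (𝒜 : Buchi Q (Set (FC ⊕ B))) : BHA X A where
  Loc := Q × Set FC
  locFinite := inferInstance
  Edg := {e | ∃ σ : Set (FC ⊕ B),
    (e.1.1, σ, e.2.2.1) ∈ 𝒜.tr ∧
    {f | Sum.inl f ∈ σ} = e.2.2.2 ∧
    {j | Sum.inr j ∈ σ} = ↑(b e.2.1)}
  Dyn := fun l => {p | ∀ f ∈ l.2, p ∈ I f}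
  Rst := fun _ => Set.univ
  Init := {l | ∃ σ : Set (FC ⊕ B),
    (𝒜.init, σ, l.1) ∈ 𝒜.tr ∧
    {f | Sum.inl f ∈ σ} = l.2 ∧
    {j : B | Sum.inr j ∈ σ} = ∅}
  Final := {l | l.1 ∈ 𝒜.acc}

/-!
The accepting run of `ℋ_φ` reads, edge by edge, a word `w` accepted by `𝒜`, hence `w ⊨ γ(φ)`.
This word carries exactly the action letters of `Σ(α)`, while its flow-constraint letters are
only a subset of those of `Σ(α)`: they are the constraints enforced by the locations of the run.
Since `φ` is positive, flow constraints occur in `γ₀(φ)` only outside negations, so the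
satisfaction of `γ₀(φ)` transfers from `w` to `α`.
-/

theorem Traj.sat.mono {X : Type} {τ : Traj X} {C D : FlowConstraint X} (h : τ.sat C)
    (hCD : C ⊆ D) : τ.sat D :=
  fun t ht => hCD (h t ht)

theorem LTL.sat_bigConj {P : Type} (w : ℕ → Set P) (l : List (LTL P)) (hl : l ≠ []) (i : ℕ) :
    LTL.Sat w (LTL.bigConj l hl) i ↔ ∀ γ ∈ l, LTL.Sat w γ i := by
  induction l with
  | nil => exact absurd rfl hl
  | cons γ l ih =>
    cases l with
    | nil => simp [LTL.bigConj]
    | cons δ l => simp [LTL.bigConj, LTL.Sat, ih]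

section SigmaTrace

variable {X A FC B : Type} (I : FC → FlowConstraint X) (b : A → Finset B) (α : HybridTrace X A)

@[simp]
theorem inl_mem_sigmaTrace (n : ℕ) (f : FC) :
    Sum.inl f ∈ SigmaTrace I b α n ↔ (α.traj n).sat (I f) := by
  cases n <;> simp [SigmaTrace]

@[simp]
theorem inr_notMem_sigmaTrace_zero (j : B) : Sum.inr j ∉ SigmaTrace I b α 0 := by
  simp [SigmaTrace]

@[simp]
theorem inr_mem_sigmaTrace_succ (n : ℕ) (j : B) :
    Sum.inr j ∈ SigmaTrace I b α (n + 1) ↔ j ∈ b (α.act n) := by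
  simp [SigmaTrace]

structure IsSubSigmaTrace (w : ℕ → Set (FC ⊕ B)) : Prop where
  subset : ∀ n, w n ⊆ SigmaTrace I b α n
  inr_mem_iff : ∀ n j, Sum.inr j ∈ w n ↔ Sum.inr j ∈ SigmaTrace I b α n

end SigmaTrace

section Translation

variable {X A FC B : Type} [Fintype B] [DecidableEq B]

theorem sat_bEnc_iff (b : A → Finset B) (hb : ∀ a, (b a).Nonempty) (a : A)
    (w : ℕ → Set (FC ⊕ B)) (i : ℕ) :
    LTL.Sat w (bEnc b hb a) i ↔ {j | Sum.inr j ∈ w i} = ↑(b a) := by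
  simp only [bEnc, LTL.sat_bigConj, List.mem_append, List.mem_map, Finset.mem_toList,
    Finset.mem_sdiff, Finset.mem_univ, true_and, Set.ext_iff, Set.mem_ofPred_eq, Finset.mem_coe]
  constructor
  · intro h j
    by_cases hj : j ∈ b a
    · simpa [hj, LTL.Sat] using h _ (.inl ⟨j, hj, rfl⟩)
    · simpa [hj, LTL.Sat] using h _ (.inr ⟨j, hj, rfl⟩)
  · rintro h γ (⟨j, hj, rfl⟩ | ⟨j, hj, rfl⟩) <;> simp [LTL.Sat, h, hj]

theorem sat_gamma0_of_sat_gammaTr (b : A → Finset B) (hb : ∀ a, (b a).Nonempty)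
    (φ : HyLTL A FC) (w : ℕ → Set (FC ⊕ B)) (i : ℕ)
    (h : LTL.Sat w (gammaTr b hb φ) i) : LTL.Sat w (gamma0 b hb φ) i :=
  (LTL.sat_bigConj _ _ _ i).1 h _ (by simp)

variable {I : FC → FlowConstraint X} {b : A → Finset B} {α : HybridTrace X A}

theorem IsSubSigmaTrace.sat_bEnc_iff_sat_act {w : ℕ → Set (FC ⊕ B)}
    (hw : IsSubSigmaTrace I b α w) (hb : ∀ a, (b a).Nonempty) (hinj : Function.Injective b)
    (a : A) (i : ℕ) :
    LTL.Sat w (bEnc b hb a) i ↔ HyLTL.Sat I α (.act a) i := by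
  rw [sat_bEnc_iff]
  cases i with
  | zero =>
    have hempty : {j | Sum.inr j ∈ w 0} = ∅ := by
      ext j
      simp [hw.inr_mem_iff]
    simpa [HyLTL.Sat, hempty] using (Finset.coe_nonempty.2 (hb a)).ne_empty.symm
  | succ n =>
    have hlabel : {j | Sum.inr j ∈ w (n + 1)} = ↑(b (α.act n)) := by
      ext j
      simp [hw.inr_mem_iff]
    simp [HyLTL.Sat, hlabel, hinj.eq_iff]

theorem HyLTL.Positive.sat_of_sat_gamma0 {φ : HyLTL A FC} (hφ : φ.Positive)
    (hb : ∀ a, (b a).Nonempty) (hinj : Function.Injective b) {w : ℕ → Set (FC ⊕ B)}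
    (hw : IsSubSigmaTrace I b α w) (i : ℕ) :
    LTL.Sat w (gamma0 b hb φ) i → HyLTL.Sat I α φ i := by
  induction hφ generalizing i with
  | flow f => exact fun h => (inl_mem_sigmaTrace I b α i f).1 (hw.subset i h)
  | act a => exact (hw.sat_bEnc_iff_sat_act hb hinj a i).1
  | nact a => exact fun h h' => h ((hw.sat_bEnc_iff_sat_act hb hinj a i).2 h')
  | and _ _ ih₁ ih₂ => exact fun h => ⟨ih₁ i h.1, ih₂ i h.2⟩
  | or _ _ ih₁ ih₂ => exact fun h => h.imp (ih₁ i) (ih₂ i)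
  | next _ ih => exact ih (i + 1)
  | untl _ _ ih₁ ih₂ =>
    rintro ⟨j, hij, hψ, hbefore⟩
    exact ⟨j, hij, ih₂ j hψ, fun k hik hkj => ih₁ k (hbefore k hik hkj)⟩
  | rel _ _ ih₁ ih₂ =>
    exact fun h j hij hbefore =>
      ih₂ j (h j hij fun k hik hkj hk => hbefore k hik hkj (ih₁ k hk))

end Translation

theorem HofBuchi.exists_accepts_isSubSigmaTrace {X A FC B Q : Type} [Finite Q] [Finite FC]
    {I : FC → FlowConstraint X} {b : A → Finset B} {𝒜 : Buchi Q (Set (FC ⊕ B))}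
    {α : HybridTrace X A} (h : (HofBuchi I b 𝒜).Accepts α) :
    ∃ w, 𝒜.Accepts w ∧ IsSubSigmaTrace I b α w := by
  obtain ⟨ℓ, ⟨σ₀, hσ₀, hσ₀FC, hσ₀B⟩, hstep, l, hl, hl_inf⟩ := h
  choose σ hσ hσFC hσB using fun i => (hstep i).2.1
  let w : ℕ → Set (FC ⊕ B) := fun | 0 => σ₀ | n + 1 => σ n
  have hwFC : ∀ n, {f | Sum.inl f ∈ w n} = (ℓ n).2
    | 0 => hσ₀FC
    | n + 1 => hσFC n
  have hwB : ∀ n j, Sum.inr j ∈ w n ↔ Sum.inr j ∈ SigmaTrace I b α n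
    | 0, j => by simpa using Set.ext_iff.1 hσ₀B j
    | n + 1, j => by simpa using Set.ext_iff.1 (hσB n) j
  refine ⟨w, ⟨fun | 0 => 𝒜.init | n + 1 => (ℓ n).1, rfl, ?_, l.1, hl, ?_⟩, ⟨?_, hwB⟩⟩
  · rintro (_ | n)
    exacts [hσ₀, hσ n]
  · intro N
    obtain ⟨n, hn, rfl⟩ := hl_inf N
    exact ⟨n + 1, by omega, rfl⟩
  · rintro n (f | j) hx
    · have hf : f ∈ (ℓ n).2 := hwFC n ▸ hx
      simpa using (hstep n).1.mono fun _ hp => hp f hf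
    · exact (hwB n j).1 hx

theorem stmt10_general {X A FC B Q : Type} [Fintype FC]
    [Fintype B] [DecidableEq B] [Finite Q]
    (I : FC → FlowConstraint X) (b : A → Finset B)
    (hb : ∀ a, (b a).Nonempty) (hinj : Function.Injective b)
    (φ : HyLTL A FC) (hφ : φ.Positive)
    (𝒜 : Buchi Q (Set (FC ⊕ B)))
    (hlang : ∀ w : ℕ → Set (FC ⊕ B), 𝒜.Accepts w ↔ LTL.Sat w (gammaTr b hb φ) 0)
    (α : HybridTrace X A) :
    (HofBuchi I b 𝒜).Accepts α → HyLTL.Sat I α φ 0 := by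
  intro hα
  obtain ⟨w, hw𝒜, hw⟩ := HofBuchi.exists_accepts_isSubSigmaTrace hα
  exact hφ.sat_of_sat_gamma0 hb hinj hw 0
    (sat_gamma0_of_sat_gammaTr b hb φ w 0 ((hlang w).1 hw𝒜))

theorem stmt10 {X A FC B Q : Type} [Fintype X] [Fintype A] [Fintype FC]
    [Fintype B] [DecidableEq B] [Finite Q]
    (I : FC → FlowConstraint X) (b : A → Finset B)
    (hb : ∀ a, (b a).Nonempty) (hinj : Function.Injective b)
    (φ : HyLTL A FC) (hφ : φ.Positive)
    (𝒜 : Buchi Q (Set (FC ⊕ B)))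
    (hlang : ∀ w : ℕ → Set (FC ⊕ B), 𝒜.Accepts w ↔ LTL.Sat w (gammaTr b hb φ) 0)
    (α : HybridTrace X A) :
    (HofBuchi I b 𝒜).Accepts α → HyLTL.Sat I α φ 0 :=
  stmt10_general I b hb hinj φ hφ 𝒜 hlang α
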